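/- There exists a constant C_d > 0 such that for every β ∈ (0,1), every integer N ≥ 1, and every choice of points x₁, …, x_N ∈ [−1/2,1/2]^d, one has ∫_{[−1/2,1/2]^d} (1/(2N²)) ∑_{i=1}^N |∇V^N(x − x_i)|² / ρ^N(x) dx ≤ C_d · N^{−1 + β + 2β/d}, where ρ^N(x) = (1/N) ∑_{j=1}^N V^N(x − x_j) > 0 and the integrand is defined at almost every x (the points where all summands are differentiable). -/

import Mathlib

open MeasureTheory Real
open scoped NNReal BigOperators

noncomputable section

/-- The mollifier `V₀` from the paper (assumption (Aᵛ)). -/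
def V0 (d : ℕ) (y : EuclideanSpace ℝ (Fin d)) : ℝ :=
  if ‖y‖ ≤ 1/2 then Real.Gamma ((d:ℝ)/2) / (2 * Real.pi ^ ((d:ℝ)/2)) * Real.exp (-‖y‖^2)
  else Real.Gamma ((d:ℝ)/2) / (2 * Real.pi ^ ((d:ℝ)/2)) * Real.exp (1/4) * Real.exp (-‖y‖)

/-- The scaled mollifier `V₀^N(y) = N^β V₀(N^{β/d} y)`. -/
def V0N (d : ℕ) (β : ℝ) (N : ℕ) (y : EuclideanSpace ℝ (Fin d)) : ℝ :=
  (N:ℝ)^β * V0 d ((N:ℝ)^(β/(d:ℝ)) • y)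

/-- An integer vector `k ∈ ℤ^d` viewed as an element of `ℝ^d`. -/
def intVec (d : ℕ) (k : Fin d → ℤ) : EuclideanSpace ℝ (Fin d) := WithLp.toLp 2 (fun i => (k i : ℝ))

/-- The periodized mollifier `V^N(x) = ∑_{k ∈ ℤ^d} V₀^N(x - k)`. -/
def VN (d : ℕ) (β : ℝ) (N : ℕ) (x : EuclideanSpace ℝ (Fin d)) : ℝ :=
  ∑' k : Fin d → ℤ, V0N d β N (x - intVec d k)

/-- The fundamental domain `[0,1)^d` of the torus. -/
def box01 (d : ℕ) : Set (EuclideanSpace ℝ (Fin d)) := {x | ∀ i, x i ∈ Set.Ico (0:ℝ) 1}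

/-- The fundamental domain `[-1/2,1/2]^d` of the torus. -/
def boxC (d : ℕ) : Set (EuclideanSpace ℝ (Fin d)) := {x | ∀ i, x i ∈ Set.Icc (-(1/2):ℝ) (1/2)}

def c0 (d : ℕ) : ℝ := Real.Gamma ((d:ℝ)/2) / (2 * Real.pi ^ ((d:ℝ)/2))

lemma c0_pos (d : ℕ) (hd : 1 ≤ d) : 0 < c0 d := by
  have : (0:ℝ) < (d:ℝ)/2 := by
    have : (1:ℝ) ≤ (d:ℝ) := by exact_mod_cast hd
    linarith
  exact div_pos (Real.Gamma_pos_of_pos this) (by positivity)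

lemma V0_nonneg (d : ℕ) (hd : 1 ≤ d) (y : EuclideanSpace ℝ (Fin d)) : 0 ≤ V0 d y := by
  have := (c0_pos d hd).le
  unfold V0 c0 at *
  split_ifs <;> positivity

lemma V0_le (d : ℕ) (hd : 1 ≤ d) (y : EuclideanSpace ℝ (Fin d)) :
    V0 d y ≤ c0 d * Real.exp (1/4) * Real.exp (-‖y‖) := by
  have hc := c0_pos d hd
  unfold V0 c0 at *
  split_ifs with h
  · rw [mul_assoc, ← Real.exp_add]
    apply mul_le_mul_of_nonneg_left (Real.exp_le_exp.mpr ?_) hc.le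
    have h0 : (0:ℝ) ≤ ‖y‖ := norm_nonneg _
    nlinarith
  · exact le_refl _

lemma V0_logLip (d : ℕ) (hd : 1 ≤ d) (u v : EuclideanSpace ℝ (Fin d)) :
    V0 d u ≤ Real.exp ‖u - v‖ * V0 d v := by
  have hc := (c0_pos d hd)
  have hru : (0:ℝ) ≤ ‖u‖ := norm_nonneg _
  have hrv : (0:ℝ) ≤ ‖v‖ := norm_nonneg _
  have habs : |‖u‖ - ‖v‖| ≤ ‖u - v‖ := abs_norm_sub_norm_le u v
  have h1 : ‖u‖ - ‖v‖ ≤ ‖u - v‖ := (abs_le.mp habs).2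
  have h2 : ‖v‖ - ‖u‖ ≤ ‖u - v‖ := by have := (abs_le.mp habs).1; linarith
  have key : ∀ a b : ℝ, a ≤ ‖u - v‖ + b →
      c0 d * Real.exp a ≤ Real.exp ‖u - v‖ * (c0 d * Real.exp b) := by
    intro a b hab
    calc c0 d * Real.exp a ≤ c0 d * Real.exp (‖u - v‖ + b) :=
          mul_le_mul_of_nonneg_left (Real.exp_le_exp.mpr hab) hc.le
      _ = Real.exp ‖u - v‖ * (c0 d * Real.exp b) := by rw [Real.exp_add]; ring
  show V0 d u ≤ Real.exp ‖u - v‖ * V0 d v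
  unfold V0
  rw [show Real.Gamma ((d:ℝ)/2) / (2 * Real.pi ^ ((d:ℝ)/2)) = c0 d from rfl]
  split_ifs with h3 h4 h4
  · exact key _ _ (by nlinarith)
  · push_neg at h4
    have := key (-‖u‖^2) (1/4 + -‖v‖) (by nlinarith)
    calc c0 d * Real.exp (-‖u‖^2) ≤ Real.exp ‖u - v‖ * (c0 d * Real.exp (1/4 + -‖v‖)) := this
      _ = Real.exp ‖u - v‖ * (c0 d * Real.exp (1/4) * Real.exp (-‖v‖)) := by
          rw [Real.exp_add]; ring
  · push_neg at h3
    have := key (1/4 + -‖u‖) (-‖v‖^2) (by nlinarith)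
    calc c0 d * Real.exp (1/4) * Real.exp (-‖u‖)
        = c0 d * Real.exp (1/4 + -‖u‖) := by rw [Real.exp_add]; ring
      _ ≤ Real.exp ‖u - v‖ * (c0 d * Real.exp (-‖v‖^2)) := this
  · push_neg at h3 h4
    have := key (1/4 + -‖u‖) (1/4 + -‖v‖) (by nlinarith)
    calc c0 d * Real.exp (1/4) * Real.exp (-‖u‖)
        = c0 d * Real.exp (1/4 + -‖u‖) := by rw [Real.exp_add]; ring
      _ ≤ Real.exp ‖u - v‖ * (c0 d * Real.exp (1/4 + -‖v‖)) := this
      _ = Real.exp ‖u - v‖ * (c0 d * Real.exp (1/4) * Real.exp (-‖v‖)) := by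
          rw [Real.exp_add]; ring

lemma pi_summable (n : ℕ) (g : ℤ → ℝ) (hg : Summable g) (hg0 : ∀ m, 0 ≤ g m) :
    Summable (fun k : Fin n → ℤ => ∏ i, g (k i)) := by
  induction n with
  | zero => exact summable_of_finite_support (Set.toFinite _)
  | succ n ih =>
    have hs : Summable (fun q : ℤ × (Fin n → ℤ) => g q.1 * ∏ i, g (q.2 i)) :=
      Summable.mul_of_nonneg (f := g) (g := fun k : Fin n → ℤ => ∏ i, g (k i)) hg ih
        (Pi.le_def.mpr hg0) (Pi.le_def.mpr fun k => Finset.prod_nonneg fun i _ => hg0 _)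
    rw [← (Fin.consEquiv (fun _ : Fin (n+1) => ℤ)).summable_iff]
    apply hs.congr
    intro q
    simp [Fin.consEquiv, Fin.prod_univ_succ]

lemma gsum (d : ℕ) (hd : 1 ≤ d) : Summable (fun m : ℤ => Real.exp (-|(m:ℝ)|/d)) := by
  have hd' : (0:ℝ) < d := by exact_mod_cast hd
  have hgeo : Summable (fun n : ℕ => Real.exp (-(1:ℝ)/d) ^ n) :=
    summable_geometric_of_lt_one (Real.exp_nonneg _)
      (Real.exp_lt_one_iff.mpr (div_neg_of_neg_of_pos (by norm_num) hd'))
  have hnat : ∀ n : ℕ, Real.exp (-(n:ℝ)/d) = Real.exp (-(1:ℝ)/d) ^ n := by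
    intro n
    rw [← Real.exp_nat_mul]
    ring_nf
  apply Summable.of_nat_of_neg
  · apply hgeo.congr
    intro n
    simp [hnat n, abs_of_nonneg (n.cast_nonneg : (0:ℝ) ≤ n)]
  · apply hgeo.congr
    intro n
    push_cast
    rw [abs_neg, abs_of_nonneg (n.cast_nonneg : (0:ℝ) ≤ n)]
    exact (hnat n).symm

lemma coord_le_norm {d : ℕ} (y : EuclideanSpace ℝ (Fin d)) (i : Fin d) : |y i| ≤ ‖y‖ := by
  rw [EuclideanSpace.norm_eq]
  have : |y i| = Real.sqrt (‖y i‖^2) := by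
    rw [Real.sqrt_sq_eq_abs, Real.norm_eq_abs, abs_abs]
  rw [this]
  apply Real.sqrt_le_sqrt
  exact Finset.single_le_sum (f := fun j => ‖y j‖^2) (fun j _ => sq_nonneg _) (Finset.mem_univ i)

lemma sum_abs_le {d : ℕ} (y : EuclideanSpace ℝ (Fin d)) : ∑ i, |y i| ≤ d * ‖y‖ := by
  calc ∑ i, |y i| ≤ ∑ _i : Fin d, ‖y‖ := Finset.sum_le_sum fun i _ => coord_le_norm y i
    _ = d * ‖y‖ := by simp [Finset.sum_const, Finset.card_univ]




lemma V0N_nonneg (d : ℕ) (hd : 1 ≤ d) (β : ℝ) (N : ℕ) (y : EuclideanSpace ℝ (Fin d)) :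
    0 ≤ V0N d β N y :=
  mul_nonneg (Real.rpow_nonneg (Nat.cast_nonneg N) β) (V0_nonneg d hd _)

lemma norm_smul_nonneg {d : ℕ} (L : ℝ) (hL : 0 ≤ L) (y : EuclideanSpace ℝ (Fin d)) :
    ‖L • y‖ = L * ‖y‖ := by
  rw [norm_smul, Real.norm_eq_abs, abs_of_nonneg hL]

lemma V0N_logLip (d : ℕ) (hd : 1 ≤ d) (β : ℝ) (hβ : 0 ≤ β) (N : ℕ)
    (z w : EuclideanSpace ℝ (Fin d)) :
    V0N d β N z ≤ Real.exp ((N:ℝ)^(β/(d:ℝ)) * ‖z - w‖) * V0N d β N w := by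
  set L := (N:ℝ)^(β/(d:ℝ)) with hLdef
  have hL : 0 ≤ L := Real.rpow_nonneg (Nat.cast_nonneg N) _
  have h := V0_logLip d hd (L • z) (L • w)
  rw [← smul_sub, norm_smul_nonneg L hL] at h
  unfold V0N
  calc (N:ℝ)^β * V0 d (L • z) ≤ (N:ℝ)^β * (Real.exp (L * ‖z - w‖) * V0 d (L • w)) :=
        mul_le_mul_of_nonneg_left h (Real.rpow_nonneg (Nat.cast_nonneg N) β)
    _ = Real.exp (L * ‖z - w‖) * ((N:ℝ)^β * V0 d (L • w)) := by ring

lemma termle (d : ℕ) (hd : 1 ≤ d) (β : ℝ) (hβ : 0 ≤ β) (N : ℕ) (hN : 1 ≤ N)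
    (y : EuclideanSpace ℝ (Fin d)) (k : Fin d → ℤ) :
    V0N d β N (y - intVec d k) ≤
      ((N:ℝ)^β * (c0 d * Real.exp (1/4)) * Real.exp ((∑ i, |y i|)/d)) *
        ∏ i, Real.exp (-|(k i : ℝ)|/d) := by
  have hd' : (0:ℝ) < d := by exact_mod_cast hd
  have hN' : (1:ℝ) ≤ N := by exact_mod_cast hN
  set L := (N:ℝ)^(β/(d:ℝ)) with hLdef
  have hL1 : 1 ≤ L := by
    rw [hLdef, show (1:ℝ) = (N:ℝ)^(0:ℝ) by rw [Real.rpow_zero]]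
    exact Real.rpow_le_rpow_of_exponent_le hN' (by positivity)
  set v := y - intVec d k with hv
  have hNβ : (0:ℝ) ≤ (N:ℝ)^β := Real.rpow_nonneg (Nat.cast_nonneg N) β
  -- step 1 : V0N v ≤ N^β c0 e^{1/4} exp(-L ‖v‖)
  have s1 : V0N d β N v ≤ (N:ℝ)^β * (c0 d * Real.exp (1/4) * Real.exp (-(L * ‖v‖))) := by
    unfold V0N
    apply mul_le_mul_of_nonneg_left _ hNβ
    have := V0_le d hd (L • v)
    rwa [norm_smul_nonneg L (by linarith) v] at this
  -- step 2 : exp(-(L‖v‖)) ≤ exp(-‖v‖)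
  have s2 : Real.exp (-(L * ‖v‖)) ≤ Real.exp (-‖v‖) := by
    apply Real.exp_le_exp.mpr
    have := norm_nonneg v
    nlinarith
  -- step 3 : -‖v‖ ≤ (∑|y i| - ∑|(k i:ℝ)|)/d
  have hvi : ∀ i, v i = y i - (k i : ℝ) := fun i => rfl
  have s3 : -‖v‖ ≤ ((∑ i, |y i|) - ∑ i, |(k i : ℝ)|)/d := by
    rw [le_div_iff₀ hd']
    have h1 := sum_abs_le v
    have h2 : ∑ i, (|(k i:ℝ)| - |y i|) ≤ ∑ i, |v i| :=
      Finset.sum_le_sum (fun i _ => by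
        rw [hvi i, abs_sub_comm (y i)]
        exact abs_sub_abs_le_abs_sub _ _)
    rw [Finset.sum_sub_distrib] at h2
    nlinarith
  have c0nn : (0:ℝ) ≤ c0 d * Real.exp (1/4) := by
    have := (c0_pos d hd).le
    positivity
  have s4 : Real.exp (-‖v‖) ≤ Real.exp ((∑ i, |y i|)/d) * ∏ i, Real.exp (-|(k i:ℝ)|/d) := by
    rw [← Real.exp_sum, ← Real.exp_add]
    apply Real.exp_le_exp.mpr
    have hsum : ∑ i, (-|(k i:ℝ)|/d) = -(∑ i, |(k i:ℝ)|)/d := by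
      rw [← Finset.sum_div, ← Finset.sum_neg_distrib]
    rw [hsum]
    calc -‖v‖ ≤ ((∑ i, |y i|) - ∑ i, |(k i:ℝ)|)/d := s3
      _ = (∑ i, |y i|)/d + -(∑ i, |(k i:ℝ)|)/d := by ring
  calc V0N d β N v ≤ (N:ℝ)^β * (c0 d * Real.exp (1/4) * Real.exp (-(L*‖v‖))) := s1
    _ ≤ (N:ℝ)^β * (c0 d * Real.exp (1/4) *
          (Real.exp ((∑ i, |y i|)/d) * ∏ i, Real.exp (-|(k i:ℝ)|/d))) := by
        apply mul_le_mul_of_nonneg_left _ hNβ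
        apply mul_le_mul_of_nonneg_left (s2.trans s4) c0nn
    _ = _ := by ring

def Ad (d : ℕ) : ℝ := ∑' k : Fin d → ℤ, ∏ i, Real.exp (-|(k i : ℝ)|/d)

lemma Ad_summable (d : ℕ) (hd : 1 ≤ d) :
    Summable (fun k : Fin d → ℤ => ∏ i, Real.exp (-|(k i : ℝ)|/d)) := by
  have := pi_summable d (fun m : ℤ => Real.exp (-|(m:ℝ)|/d)) (gsum d hd)
    (fun m => Real.exp_nonneg _)
  apply this.congr
  intro k
  rfl

lemma Ad_nonneg (d : ℕ) : 0 ≤ Ad d :=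
  tsum_nonneg fun k => Finset.prod_nonneg fun i _ => Real.exp_nonneg _

lemma VN_summable (d : ℕ) (hd : 1 ≤ d) (β : ℝ) (hβ : 0 ≤ β) (N : ℕ) (hN : 1 ≤ N)
    (y : EuclideanSpace ℝ (Fin d)) :
    Summable (fun k : Fin d → ℤ => V0N d β N (y - intVec d k)) := by
  apply Summable.of_nonneg_of_le (fun k => V0N_nonneg d hd β N _)
    (termle d hd β hβ N hN y)
  exact ((Ad_summable d hd).mul_left _)

lemma VN_nonneg (d : ℕ) (hd : 1 ≤ d) (β : ℝ) (N : ℕ) (y : EuclideanSpace ℝ (Fin d)) :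
    0 ≤ VN d β N y :=
  tsum_nonneg fun k => V0N_nonneg d hd β N _

lemma VN_logLip (d : ℕ) (hd : 1 ≤ d) (β : ℝ) (hβ : 0 ≤ β) (N : ℕ) (hN : 1 ≤ N)
    (z w : EuclideanSpace ℝ (Fin d)) :
    VN d β N z ≤ Real.exp ((N:ℝ)^(β/(d:ℝ)) * ‖z - w‖) * VN d β N w := by
  unfold VN
  rw [← tsum_mul_left]
  apply Summable.tsum_le_tsum _ (VN_summable d hd β hβ N hN z)
    ((VN_summable d hd β hβ N hN w).mul_left _)
  intro k
  have h := V0N_logLip d hd β hβ N (z - intVec d k) (w - intVec d k)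
  rwa [sub_sub_sub_cancel_right] at h

lemma VN_le (d : ℕ) (hd : 1 ≤ d) (β : ℝ) (hβ : 0 ≤ β) (N : ℕ) (hN : 1 ≤ N)
    (y : EuclideanSpace ℝ (Fin d)) (hy : ∀ i, |y i| ≤ 1) :
    VN d β N y ≤ (N:ℝ)^β * (c0 d * Real.exp (1/4) * Real.exp 1 * Ad d) := by
  have hd' : (0:ℝ) < d := by exact_mod_cast hd
  have hNβ : (0:ℝ) ≤ (N:ℝ)^β := Real.rpow_nonneg (Nat.cast_nonneg N) β
  have c0nn : (0:ℝ) ≤ c0 d * Real.exp (1/4) := by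
    have := (c0_pos d hd).le
    positivity
  have h1 : VN d β N y ≤
      ((N:ℝ)^β * (c0 d * Real.exp (1/4)) * Real.exp ((∑ i, |y i|)/d)) * Ad d := by
    unfold VN Ad
    rw [← tsum_mul_left]
    exact Summable.tsum_le_tsum (termle d hd β hβ N hN y) (VN_summable d hd β hβ N hN y)
      ((Ad_summable d hd).mul_left _)
  have h2 : Real.exp ((∑ i, |y i|)/d) ≤ Real.exp 1 := by
    apply Real.exp_le_exp.mpr
    rw [div_le_one hd']
    calc ∑ i, |y i| ≤ ∑ _i : Fin d, (1:ℝ) := Finset.sum_le_sum fun i _ => hy i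
      _ = d := by simp
  calc VN d β N y ≤ ((N:ℝ)^β * (c0 d * Real.exp (1/4)) * Real.exp ((∑ i, |y i|)/d)) * Ad d := h1
    _ ≤ ((N:ℝ)^β * (c0 d * Real.exp (1/4)) * Real.exp 1) * Ad d := by
        apply mul_le_mul_of_nonneg_right _ (Ad_nonneg d)
        exact mul_le_mul_of_nonneg_left h2 (by positivity)
    _ = (N:ℝ)^β * (c0 d * Real.exp (1/4) * Real.exp 1 * Ad d) := by ring

lemma grad_bound (d : ℕ) (hd : 1 ≤ d) (β : ℝ) (hβ : 0 ≤ β) (N : ℕ) (hN : 1 ≤ N)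
    (y : EuclideanSpace ℝ (Fin d)) :
    ‖gradient (VN d β N) y‖ ≤ Real.exp 1 * (N:ℝ)^(β/(d:ℝ)) * VN d β N y := by
  set L := (N:ℝ)^(β/(d:ℝ)) with hLdef
  have hN' : (1:ℝ) ≤ N := by exact_mod_cast hN
  have hL1 : 1 ≤ L := by
    rw [hLdef, show (1:ℝ) = (N:ℝ)^(0:ℝ) by rw [Real.rpow_zero]]
    exact Real.rpow_le_rpow_of_exponent_le hN' (by positivity)
  have hL0 : 0 < L := lt_of_lt_of_le one_pos hL1
  have hVy : 0 ≤ VN d β N y := VN_nonneg d hd β N y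
  have hC0 : 0 ≤ Real.exp 1 * L * VN d β N y := by positivity
  have hgradnorm : ‖gradient (VN d β N) y‖ = ‖fderiv ℝ (VN d β N) y‖ := by
    unfold gradient
    exact LinearIsometryEquiv.norm_map _ _
  rw [hgradnorm]
  by_cases hdiff : DifferentiableAt ℝ (VN d β N) y
  · apply hdiff.hasFDerivAt.le_of_lip' hC0
    have hball : Metric.ball y (1/L) ∈ nhds y := Metric.ball_mem_nhds y (by positivity)
    filter_upwards [hball] with x hx
    rw [Metric.mem_ball, dist_eq_norm] at hx
    set t := L * ‖x - y‖ with htdef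
    have ht0 : 0 ≤ t := by positivity
    have ht1 : t ≤ 1 := by
      rw [htdef]
      calc L * ‖x - y‖ ≤ L * (1/L) := by
            apply mul_le_mul_of_nonneg_left hx.le hL0.le
        _ = 1 := by field_simp
    have h1 : VN d β N x ≤ Real.exp t * VN d β N y := VN_logLip d hd β hβ N hN x y
    have h2 : VN d β N y ≤ Real.exp t * VN d β N x := by
      have := VN_logLip d hd β hβ N hN y x
      rwa [norm_sub_rev, ← htdef] at this
    have hexp1 : t + 1 ≤ Real.exp t := Real.add_one_le_exp t
    have hexp2 : -t + 1 ≤ Real.exp (-t) := Real.add_one_le_exp (-t)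
    have hexpinv : Real.exp (-t) * Real.exp t = 1 := by
      rw [← Real.exp_add]; simp
    have hlow : Real.exp (-t) * VN d β N y ≤ VN d β N x := by
      calc Real.exp (-t) * VN d β N y ≤ Real.exp (-t) * (Real.exp t * VN d β N x) :=
            mul_le_mul_of_nonneg_left h2 (Real.exp_nonneg _)
        _ = VN d β N x := by rw [← mul_assoc, hexpinv, one_mul]
    have habs : |VN d β N x - VN d β N y| ≤ (Real.exp t - 1) * VN d β N y := by
      rw [abs_le]
      constructor
      · have : (1 - Real.exp (-t)) * VN d β N y ≤ (Real.exp t - 1) * VN d β N y := by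
          apply mul_le_mul_of_nonneg_right _ hVy
          nlinarith [Real.exp_pos t, Real.exp_pos (-t)]
        nlinarith [hlow]
      · nlinarith [h1]
    have het : Real.exp t - 1 ≤ t * Real.exp 1 := by
      have he : Real.exp t ≤ Real.exp 1 := Real.exp_le_exp.mpr ht1
      nlinarith [Real.exp_pos t]
    rw [Real.norm_eq_abs]
    calc |VN d β N x - VN d β N y| ≤ (Real.exp t - 1) * VN d β N y := habs
      _ ≤ (t * Real.exp 1) * VN d β N y := mul_le_mul_of_nonneg_right het hVy
      _ = Real.exp 1 * L * VN d β N y * ‖x - y‖ := by rw [htdef]; ring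
  · rw [fderiv_zero_of_not_differentiableAt hdiff]
    simpa using hC0


lemma boxC_eq (d : ℕ) : boxC d =
    (MeasurableEquiv.toLp 2 (Fin d → ℝ)).symm ⁻¹'
      (Set.univ.pi fun _ : Fin d => Set.Icc (-(1/2):ℝ) (1/2)) := by
  ext x
  simp only [boxC, Set.mem_preimage, Set.mem_pi, Set.mem_univ, forall_true_left,
    Set.mem_Icc, Set.mem_setOf_eq]
  rfl

lemma boxC_measurable (d : ℕ) : MeasurableSet (boxC d) := by
  rw [boxC_eq]
  exact (MeasurableEquiv.toLp 2 (Fin d → ℝ)).symm.measurable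
    (MeasurableSet.univ_pi fun i => measurableSet_Icc)

lemma boxC_volume (d : ℕ) : volume (boxC d) = 1 := by
  rw [boxC_eq]
  rw [(EuclideanSpace.volume_preserving_symm_measurableEquiv_toLp (Fin d)).measure_preimage
    ((MeasurableSet.univ_pi fun i : Fin d => measurableSet_Icc (a := (-(1/2):ℝ)) (b := (1/2:ℝ))).nullMeasurableSet)]
  rw [volume_pi_pi]
  simp [Real.volume_Icc]
  norm_num

lemma pointwise_bound (d : ℕ) (hd : 1 ≤ d) (β : ℝ) (hβ : 0 ≤ β) (N : ℕ) (hN : 1 ≤ N)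
    (p : Fin N → EuclideanSpace ℝ (Fin d)) (hp : ∀ i, p i ∈ boxC d)
    (x : EuclideanSpace ℝ (Fin d)) (hx : x ∈ boxC d) :
    (1/(2*(N:ℝ)^2)) * ∑ i, ‖gradient (VN d β N) (x - p i)‖^2
        / ((1/(N:ℝ)) * ∑ j, VN d β N (x - p j))
      ≤ ((Real.exp 1)^2 * (c0 d * Real.exp (1/4) * Real.exp 1 * Ad d) / 2) *
          (N:ℝ) ^ (-1 + β + 2*β/(d:ℝ)) := by
  have hd' : (0:ℝ) < d := by exact_mod_cast hd
  have hN' : (1:ℝ) ≤ (N:ℝ) := by exact_mod_cast hN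
  have hN0 : (0:ℝ) < (N:ℝ) := lt_of_lt_of_le one_pos hN'
  set M := c0 d * Real.exp (1/4) * Real.exp 1 * Ad d with hMdef
  have hM0 : 0 ≤ M := by
    have h1 := (c0_pos d hd).le
    have h2 := Ad_nonneg d
    positivity
  set L := (N:ℝ)^(β/(d:ℝ)) with hLdef
  have hL0 : (0:ℝ) < L := Real.rpow_pos_of_pos hN0 _
  set K := (Real.exp 1)^2 * L^2 * ((N:ℝ)^β * M) with hKdef
  have hK0 : 0 ≤ K := by
    have := Real.rpow_nonneg hN0.le β
    positivity
  have hRHSnn : 0 ≤ ((Real.exp 1)^2 * M / 2) * (N:ℝ) ^ (-1 + β + 2*β/(d:ℝ)) := by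
    have := Real.rpow_nonneg hN0.le (-1 + β + 2*β/(d:ℝ))
    positivity
  -- coordinates bound
  have hcoord : ∀ i : Fin N, ∀ j : Fin d, |(x - p i) j| ≤ 1 := by
    intro i j
    have h1 := hx j
    have h2 := (hp i) j
    simp only [Set.mem_Icc] at h1 h2
    have : (x - p i) j = x j - p i j := rfl
    rw [this, abs_le]
    constructor <;> linarith [h1.1, h1.2, h2.1, h2.2]
  have hVle : ∀ i : Fin N, VN d β N (x - p i) ≤ (N:ℝ)^β * M :=
    fun i => VN_le d hd β hβ N hN _ (hcoord i)
  have hVnn : ∀ i : Fin N, 0 ≤ VN d β N (x - p i) := fun i => VN_nonneg d hd β N _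
  have hg2 : ∀ i : Fin N, ‖gradient (VN d β N) (x - p i)‖^2 ≤ K * VN d β N (x - p i) := by
    intro i
    have hgb := grad_bound d hd β hβ N hN (x - p i)
    have h1 : ‖gradient (VN d β N) (x - p i)‖^2 ≤
        (Real.exp 1 * L * VN d β N (x - p i))^2 :=
      pow_le_pow_left₀ (norm_nonneg _) hgb 2
    calc ‖gradient (VN d β N) (x - p i)‖^2 ≤ (Real.exp 1 * L * VN d β N (x - p i))^2 := h1
      _ = (Real.exp 1)^2 * L^2 * VN d β N (x - p i) * VN d β N (x - p i) := by ring
      _ ≤ (Real.exp 1)^2 * L^2 * ((N:ℝ)^β * M) * VN d β N (x - p i) := by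
          apply mul_le_mul_of_nonneg_right _ (hVnn i)
          apply mul_le_mul_of_nonneg_left (hVle i) (by positivity)
      _ = K * VN d β N (x - p i) := by rw [hKdef]
  set S := ∑ j, VN d β N (x - p j) with hSdef
  have hS0 : 0 ≤ S := Finset.sum_nonneg fun j _ => hVnn j
  by_cases hS : S = 0
  · rw [hS]
    simp only [mul_zero, div_zero, Finset.sum_const_zero, mul_zero]
    exact hRHSnn
  · have hSpos : 0 < S := lt_of_le_of_ne hS0 (Ne.symm hS)
    have hρpos : 0 < (1/(N:ℝ)) * S := by positivity
    have hsum : ∑ i, ‖gradient (VN d β N) (x - p i)‖^2 / ((1/(N:ℝ)) * S) ≤ K * (N:ℝ) := by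
      calc ∑ i, ‖gradient (VN d β N) (x - p i)‖^2 / ((1/(N:ℝ)) * S)
          ≤ ∑ i, K * VN d β N (x - p i) / ((1/(N:ℝ)) * S) :=
            Finset.sum_le_sum fun i _ => (div_le_div_iff_of_pos_right hρpos).mpr (hg2 i)
        _ = (K * S) / ((1/(N:ℝ)) * S) := by
            rw [← Finset.sum_div, ← Finset.mul_sum]
        _ = K * (N:ℝ) := by field_simp
    have hfinal : (1/(2*(N:ℝ)^2)) * (K * (N:ℝ)) =
        ((Real.exp 1)^2 * M / 2) * (N:ℝ) ^ (-1 + β + 2*β/(d:ℝ)) := by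
      have hL2 : L^2 = (N:ℝ)^(β/(d:ℝ)*2) := by
        rw [Real.rpow_mul hN0.le, Real.rpow_two]
      have hrw2 : (N:ℝ)^(β/(d:ℝ)*2) * (N:ℝ)^β * (N:ℝ)^(1:ℝ) / (N:ℝ)^((2:ℕ):ℝ) =
          (N:ℝ) ^ (-1 + β + 2*β/(d:ℝ)) := by
        rw [← Real.rpow_add hN0, ← Real.rpow_add hN0, ← Real.rpow_sub hN0]
        congr 1
        push_cast
        ring
      have hrw : (N:ℝ) ^ (-1 + β + 2*β/(d:ℝ)) = L^2 * (N:ℝ)^β * (N:ℝ) / (N:ℝ)^2 := by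
        rw [Real.rpow_one, Real.rpow_natCast] at hrw2
        rw [hL2]
        exact hrw2.symm
      rw [hrw, hKdef]
      field_simp
    calc (1/(2*(N:ℝ)^2)) * ∑ i, ‖gradient (VN d β N) (x - p i)‖^2 / ((1/(N:ℝ)) * S)
        ≤ (1/(2*(N:ℝ)^2)) * (K * (N:ℝ)) := by
          apply mul_le_mul_of_nonneg_left hsum (by positivity)
      _ = ((Real.exp 1)^2 * M / 2) * (N:ℝ) ^ (-1 + β + 2*β/(d:ℝ)) := hfinal


/-- the Fisher-information-type error term of the particle system is bounded:
`∫ (1/(2N²)) ∑_i |∇V^N(x - x_i)|² / ρ^N(x) dx ≤ C_d N^{-1+β+2β/d}`. -/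
theorem stmt9 (d : ℕ) (hd : 1 ≤ d) :
    ∃ C : ℝ, 0 < C ∧ ∀ β ∈ Set.Ioo (0:ℝ) 1, ∀ N : ℕ, 1 ≤ N →
      ∀ p : Fin N → EuclideanSpace ℝ (Fin d), (∀ i, p i ∈ boxC d) →
        (∫ x in boxC d, (1/(2*(N:ℝ)^2)) *
            ∑ i, ‖gradient (VN d β N) (x - p i)‖^2
              / ((1/(N:ℝ)) * ∑ j, VN d β N (x - p j)))
          ≤ C * (N:ℝ) ^ (-1 + β + 2*β/(d:ℝ)) := by
  set C' := (Real.exp 1)^2 * (c0 d * Real.exp (1/4) * Real.exp 1 * Ad d) / 2 with hC'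
  refine ⟨max 1 C', lt_of_lt_of_le one_pos (le_max_left _ _), ?_⟩
  intro β hβ N hN p hp
  have hN0 : (0:ℝ) < N := by exact_mod_cast hN
  have hrpnn : (0:ℝ) ≤ (N:ℝ) ^ (-1 + β + 2*β/(d:ℝ)) := Real.rpow_nonneg hN0.le _
  set f : EuclideanSpace ℝ (Fin d) → ℝ := fun x => (1/(2*(N:ℝ)^2)) *
      ∑ i, ‖gradient (VN d β N) (x - p i)‖^2
        / ((1/(N:ℝ)) * ∑ j, VN d β N (x - p j)) with hf
  have hfnn : ∀ x, 0 ≤ f x := by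
    intro x
    apply mul_nonneg (by positivity)
    apply Finset.sum_nonneg
    intro i _
    apply div_nonneg (sq_nonneg _)
    apply mul_nonneg (by positivity)
    exact Finset.sum_nonneg fun j _ => VN_nonneg d hd β N _
  have hbound : ∀ x ∈ boxC d, ‖f x‖ ≤ C' * (N:ℝ) ^ (-1 + β + 2*β/(d:ℝ)) := by
    intro x hx
    rw [Real.norm_eq_abs, abs_of_nonneg (hfnn x)]
    exact pointwise_bound d hd β hβ.1.le N hN p hp x hx
  have hvol : volume (boxC d) < ⊤ := by
    rw [boxC_volume]
    exact ENNReal.one_lt_top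
  have hkey := norm_setIntegral_le_of_norm_le_const (μ := volume) (s := boxC d)
    hvol hbound
  rw [measureReal_def, boxC_volume] at hkey
  simp only [ENNReal.toReal_one, mul_one] at hkey
  calc (∫ x in boxC d, f x) ≤ ‖∫ x in boxC d, f x‖ := le_abs_self _
    _ ≤ C' * (N:ℝ) ^ (-1 + β + 2*β/(d:ℝ)) := hkey
    _ ≤ (max 1 C') * (N:ℝ) ^ (-1 + β + 2*β/(d:ℝ)) :=
        mul_le_mul_of_nonneg_right (le_max_right _ _) hrpnn
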